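/- arXiv:2309.05871 — 2 statements merged into one kernel-verified Lean document; each statement's English description precedes it below -/
import Mathlib

section
/- For every ε ≥ 0 and every distribution p on V, the distribution p̃ = T_{ε,0}(p) satisfies the pointwise bounds e^{−ε}·p_k ≤ p̃_k ≤ e^ε·p_k for every 1 ≤ k ≤ q. -/
open Finset

/-- Prefix sum `s_k = p_1 + ⋯ + p_k` (0-indexed internally: sum of entries with index `< k`). -/
noncomputable def prefixSum (q : ℕ) (p : Fin q → ℝ) (k : ℕ) : ℝ :=
  ∑ i ∈ Finset.univ.filter (fun i : Fin q => (i : ℕ) < k), p i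

/-- `p` is a probability distribution on `V = {1, …, q}`. -/
def IsDist (q : ℕ) (p : Fin q → ℝ) : Prop :=
  (∀ k, 0 ≤ p k) ∧ ∑ k, p k = 1

/-- The modified prefix sums `s'_k` defining the operator `T_{ε,δ}`:
`s'_0 = 0` and `s'_k = min {1, min {e^ε s_k, 1 - e^{-ε} (1 - s_k)} + δ}` for `k ≥ 1`. -/
noncomputable def sPrime (ε δ : ℝ) (q : ℕ) (p : Fin q → ℝ) (k : ℕ) : ℝ :=
  if k = 0 then 0
  else min 1 (min (Real.exp ε * prefixSum q p k)
      (1 - Real.exp (-ε) * (1 - prefixSum q p k)) + δ)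

/-- The operator `T_{ε,δ}`: `(T_{ε,δ} p)_k = s'_k - s'_{k-1}`. -/
noncomputable def Tmap (ε δ : ℝ) (q : ℕ) (p : Fin q → ℝ) : Fin q → ℝ :=
  fun k => sPrime ε δ q p ((k : ℕ) + 1) - sPrime ε δ q p (k : ℕ)

/-- `P` and `Q` are `(ε,δ)`-close: for every `S ⊆ V`,
`P(S) ≤ e^ε Q(S) + δ` and `Q(S) ≤ e^ε P(S) + δ`. -/
def Close (ε δ : ℝ) (q : ℕ) (P Q : Fin q → ℝ) : Prop :=
  ∀ S : Finset (Fin q),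
    (∑ k ∈ S, P k) ≤ Real.exp ε * (∑ k ∈ S, Q k) + δ ∧
    (∑ k ∈ S, Q k) ≤ Real.exp ε * (∑ k ∈ S, P k) + δ

/-- Dominance ordering: `x ⪯ y` iff every prefix sum of `x` is at most that of `y`. -/
def Dom (q : ℕ) (x y : Fin q → ℝ) : Prop :=
  ∀ k : ℕ, k ≤ q → prefixSum q x k ≤ prefixSum q y k

/-!
For `ε ≥ 0` the cap at `1` in `s'_k` is never active, so `s'_k = f(s_k)` with
`f(s) = min (e^ε s) (1 - e^{-ε} (1 - s))`, a minimum of two lines of slopes `e^ε` and `e^{-ε}`.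
Increments of a minimum of two functions lie in any interval containing the increments of both,
so `p̃_k = f(s_k + p_k) - f(s_k)` lies between `e^{-ε} p_k` and `e^ε p_k`.
-/

lemma prefixSum_zero (q : ℕ) (p : Fin q → ℝ) : prefixSum q p 0 = 0 := by
  simp [prefixSum]

lemma prefixSum_succ (q : ℕ) (p : Fin q → ℝ) (k : Fin q) :
    prefixSum q p ((k : ℕ) + 1) = prefixSum q p (k : ℕ) + p k := by
  have hfilter : univ.filter (fun i : Fin q => (i : ℕ) < k + 1)
      = insert k (univ.filter (fun i : Fin q => (i : ℕ) < k)) := by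
    ext i
    simp only [mem_filter, mem_univ, true_and, mem_insert, Fin.ext_iff]
    omega
  rw [prefixSum, hfilter, sum_insert (by simp), add_comm]
  rfl

lemma prefixSum_le_sum (q : ℕ) (p : Fin q → ℝ) (hp : ∀ i, 0 ≤ p i) (k : ℕ) :
    prefixSum q p k ≤ ∑ i, p i :=
  sum_le_sum_of_subset_of_nonneg (filter_subset _ _) fun i _ _ => hp i

lemma min_sub_min_mem_Icc {a a' b b' lo hi : ℝ} (ha : a' - a ∈ Set.Icc lo hi)
    (hb : b' - b ∈ Set.Icc lo hi) : min a' b' - min a b ∈ Set.Icc lo hi := by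
  obtain ⟨ha₁, ha₂⟩ := ha
  obtain ⟨hb₁, hb₂⟩ := hb
  constructor
  · have : min (a + lo) (b + lo) ≤ min a' b' := min_le_min (by linarith) (by linarith)
    rw [min_add_add_right] at this
    linarith
  · have : min a' b' ≤ min (a + hi) (b + hi) := min_le_min (by linarith) (by linarith)
    rw [min_add_add_right] at this
    linarith

noncomputable def envelope (ε s : ℝ) : ℝ :=
  min (Real.exp ε * s) (1 - Real.exp (-ε) * (1 - s))

lemma envelope_zero {ε : ℝ} (hε : 0 ≤ ε) : envelope ε 0 = 0 := by
  have : Real.exp (-ε) ≤ 1 := Real.exp_le_one_iff.mpr (by linarith)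
  rw [envelope, mul_zero, min_eq_left (by linarith)]

lemma envelope_le_one (ε : ℝ) {s : ℝ} (hs : s ≤ 1) : envelope ε s ≤ 1 := by
  have : 0 ≤ Real.exp (-ε) * (1 - s) := mul_nonneg (Real.exp_nonneg _) (by linarith)
  exact (min_le_right _ _).trans (by linarith)

lemma envelope_add_sub_mem_Icc {ε d : ℝ} (hε : 0 ≤ ε) (hd : 0 ≤ d) (s : ℝ) :
    envelope ε (s + d) - envelope ε s ∈ Set.Icc (Real.exp (-ε) * d) (Real.exp ε * d) := by
  have hexp : Real.exp (-ε) * d ≤ Real.exp ε * d :=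
    mul_le_mul_of_nonneg_right (Real.exp_le_exp.mpr (by linarith)) hd
  apply min_sub_min_mem_Icc <;> constructor <;> linarith

lemma sPrime_zero_eq_envelope {ε : ℝ} (hε : 0 ≤ ε) (q : ℕ) (p : Fin q → ℝ) (hp : IsDist q p)
    (k : ℕ) : sPrime ε 0 q p k = envelope ε (prefixSum q p k) := by
  rcases eq_or_ne k 0 with rfl | hk
  · rw [sPrime, if_pos rfl, prefixSum_zero, envelope_zero hε]
  · have hs : prefixSum q p k ≤ 1 := hp.2 ▸ prefixSum_le_sum q p hp.1 k
    rw [sPrime, if_neg hk, add_zero, ← envelope, min_eq_right (envelope_le_one ε hs)]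

theorem Tmap_pointwise_bounds_general (q : ℕ) (ε : ℝ) (hε : 0 ≤ ε)
    (p : Fin q → ℝ) (hp : IsDist q p) :
    ∀ k : Fin q,
      Real.exp (-ε) * p k ≤ Tmap ε 0 q p k ∧ Tmap ε 0 q p k ≤ Real.exp ε * p k := by
  intro k
  rw [Tmap, sPrime_zero_eq_envelope hε q p hp, sPrime_zero_eq_envelope hε q p hp,
    prefixSum_succ]
  exact envelope_add_sub_mem_Icc hε (hp.1 k) _

/-- For ε ≥ 0 and any distribution `p`, the distribution `p̃ = T_{ε,0}(p)`
satisfies `e^{-ε} p_k ≤ p̃_k ≤ e^ε p_k` for every `k`. -/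
theorem Tmap_pointwise_bounds (q : ℕ) (hq : 1 ≤ q) (ε : ℝ) (hε : 0 ≤ ε)
    (p : Fin q → ℝ) (hp : IsDist q p) :
    ∀ k : Fin q,
      Real.exp (-ε) * p k ≤ Tmap ε 0 q p k ∧ Tmap ε 0 q p k ≤ Real.exp ε * p k :=
  Tmap_pointwise_bounds_general q ε hε p hp
end

section
/- For every ε ≥ 0, every δ with 0 ≤ δ ≤ 1, and every distribution p on V, the total variation distance between T_{ε,0}(p) and T_{ε,δ}(p) is at most δ. -/
/-!
For `k ≥ 1` the prefix sums of `T_{ε,δ}(p)` and `T_{ε,0}(p)` differ by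
`g_k = min {δ, (1 - m_k)⁺}`, where `m_k = min {e^ε s_k, 1 - e^{-ε} (1 - s_k)}` is monotone in `k`;
so `g` is antitone with values in `[0, δ]`, while at `k = 0` both prefix sums vanish.
Hence `T_{ε,0}(p) - T_{ε,δ}(p) = u - v` with `u_k = g_k - g_{k+1} ≥ 0` and `v` the point mass
`g_0` at the first element; both have total mass at most `g_0 ≤ δ`, so every set `S` receives
a signed mass in `[-δ, δ]`.
-/

open Finset

theorem abs_sum_sub_le_of_nonneg {ι : Type*} [Fintype ι] {u v : ι → ℝ} {δ : ℝ}
    (hu : ∀ i, 0 ≤ u i) (hv : ∀ i, 0 ≤ v i) (hu_sum : ∑ i, u i ≤ δ) (hv_sum : ∑ i, v i ≤ δ)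
    (S : Finset ι) : |∑ i ∈ S, (u i - v i)| ≤ δ := by
  rw [sum_sub_distrib]
  exact abs_sub_le_of_nonneg_of_le (sum_nonneg fun i _ => hu i)
    ((sum_le_univ_sum_of_nonneg hu).trans hu_sum) (sum_nonneg fun i _ => hv i)
    ((sum_le_univ_sum_of_nonneg hv).trans hv_sum)

theorem min_one_add_sub_min_one {x δ : ℝ} (hδ : 0 ≤ δ) :
    min 1 (x + δ) - min 1 x = min δ (max 0 (1 - x)) := by
  grind

theorem prefixSum_mono {q : ℕ} {p : Fin q → ℝ} (hp : ∀ k, 0 ≤ p k) :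
    Monotone (prefixSum q p) := by
  intro j k hjk
  refine sum_le_sum_of_subset_of_nonneg (fun i hi => ?_) fun i _ _ => hp i
  simp only [mem_filter, mem_univ, true_and] at hi ⊢
  omega

noncomputable def privEnvelope (ε s : ℝ) : ℝ :=
  min (Real.exp ε * s) (1 - Real.exp (-ε) * (1 - s))

theorem privEnvelope_mono (ε : ℝ) : Monotone (privEnvelope ε) := fun _ _ hst =>
  min_le_min (by gcongr) (by gcongr)

noncomputable def sPrimeGap (ε δ : ℝ) (q : ℕ) (p : Fin q → ℝ) (k : ℕ) : ℝ :=
  min δ (max 0 (1 - privEnvelope ε (prefixSum q p k)))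

section sPrimeGap

variable {ε δ : ℝ} {q : ℕ} {p : Fin q → ℝ}

theorem sPrimeGap_nonneg (hδ : 0 ≤ δ) (k : ℕ) : 0 ≤ sPrimeGap ε δ q p k :=
  le_min hδ (le_max_left _ _)

theorem sPrimeGap_le (k : ℕ) : sPrimeGap ε δ q p k ≤ δ :=
  min_le_left _ _

theorem sPrimeGap_antitone (hp : ∀ k, 0 ≤ p k) : Antitone (sPrimeGap ε δ q p) := fun _ _ hjk =>
  min_le_min le_rfl <| max_le_max le_rfl <| sub_le_sub_left
    (privEnvelope_mono ε (prefixSum_mono hp hjk)) 1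

theorem sPrime_sub_sPrime_zero (hδ : 0 ≤ δ) (k : ℕ) :
    sPrime ε δ q p k - sPrime ε 0 q p k = if k = 0 then 0 else sPrimeGap ε δ q p k := by
  split_ifs with hk
  · simp [sPrime, hk]
  · simp only [sPrime, hk, if_false, add_zero]
    exact min_one_add_sub_min_one hδ

theorem Tmap_zero_sub_Tmap (hδ : 0 ≤ δ) (k : Fin q) :
    Tmap ε 0 q p k - Tmap ε δ q p k =
      (sPrimeGap ε δ q p k - sPrimeGap ε δ q p (k + 1)) -
        if (k : ℕ) = 0 then sPrimeGap ε δ q p 0 else 0 := by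
  have h := sPrime_sub_sPrime_zero (ε := ε) (p := p) hδ
  calc Tmap ε 0 q p k - Tmap ε δ q p k
      = (sPrime ε δ q p k - sPrime ε 0 q p k) -
          (sPrime ε δ q p (k + 1) - sPrime ε 0 q p (k + 1)) := by
        simp only [Tmap]; ring
    _ = _ := by
        rw [h, h, if_neg k.val.succ_ne_zero]
        split_ifs with h0 <;> simp [h0]

end sPrimeGap

theorem Tmap_tv_le_general (q : ℕ) (ε δ : ℝ) (hδ0 : 0 ≤ δ)
    (p : Fin q → ℝ) (hp : IsDist q p) :
    ∀ S : Finset (Fin q),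
      |(∑ k ∈ S, Tmap ε 0 q p k) - (∑ k ∈ S, Tmap ε δ q p k)| ≤ δ := by
  intro S
  set g := sPrimeGap ε δ q p
  have hg_nonneg : ∀ k, 0 ≤ g k := sPrimeGap_nonneg hδ0
  have hg_le : ∀ k, g k ≤ δ := sPrimeGap_le
  rw [← sum_sub_distrib]
  simp_rw [Tmap_zero_sub_Tmap hδ0]
  refine abs_sum_sub_le_of_nonneg (fun k => sub_nonneg.2 (sPrimeGap_antitone hp.1 k.val.le_succ))
    (fun k => ?_) ?_ ?_ S
  · split_ifs
    exacts [hg_nonneg 0, le_rfl]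
  · rw [Fin.sum_univ_eq_sum_range (fun k => g k - g (k + 1)), sum_range_sub']
    linarith [hg_nonneg q, hg_le 0]
  · rw [Fin.sum_univ_eq_sum_range (fun k => if k = 0 then g 0 else 0), sum_ite_eq']
    split_ifs
    exacts [hg_le 0, hδ0]

/-- For ε ≥ 0, 0 ≤ δ ≤ 1, and any distribution `p`, the total variation
distance between `T_{ε,0}(p)` and `T_{ε,δ}(p)` is at most `δ`, i.e. for every subset `S`,
`|T_{ε,0}(p)(S) − T_{ε,δ}(p)(S)| ≤ δ`. -/
theorem Tmap_tv_le (q : ℕ) (hq : 1 ≤ q) (ε δ : ℝ) (hε : 0 ≤ ε) (hδ0 : 0 ≤ δ) (hδ1 : δ ≤ 1)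
    (p : Fin q → ℝ) (hp : IsDist q p) :
    ∀ S : Finset (Fin q),
      |(∑ k ∈ S, Tmap ε 0 q p k) - (∑ k ∈ S, Tmap ε δ q p k)| ≤ δ :=
  Tmap_tv_le_general q ε δ hδ0 p hp
end
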